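/- Stable models of the original program project to stable models of the justified residual program: with P, θ, Q = (W, S, D) and remaining variables V_r as above, if θ ∪ π ∪ θ_r is a stable model of P for some complete assignment π over W and θ_r over V_r, then π is a stable model of Q. -/
import Mathlib


/-- An ASP-SAT program over variables of type `V`: a set of variables, a subset
of founded variables (the rest being standard), rules `a ← body` with founded
head `a` and a body of literals (a literal is a pair of a variable and a
polarity, `true` meaning positive), and constraints given as clauses (sets of
literals). -/
structure Prog (V : Type*) where
  vars : Set V
  founded : Set V
  rules : Set (V × Set (V × Bool))
  constraints : Set (Set (V × Bool))

namespace Prog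

variable {V : Type*}

/-- Negation of a literal. -/
def lneg (l : V × Bool) : V × Bool := (l.1, !l.2)

/-- The variables occurring in an assignment (a set of literals). -/
def avars (θ : Set (V × Bool)) : Set V := {v | (v, true) ∈ θ ∨ (v, false) ∈ θ}

/-- An assignment is consistent if no variable occurs with both polarities. -/
def Consistent (θ : Set (V × Bool)) : Prop :=
  ∀ v : V, ¬ ((v, true) ∈ θ ∧ (v, false) ∈ θ)

/-- A set `M` satisfies a positive rule `(a, B)` iff `B ⊆ M → a ∈ M`. -/
def SatRules {W : Type*} (R : Set (W × Set W)) (M : Set W) : Prop :=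
  ∀ r ∈ R, r.2 ⊆ M → r.1 ∈ M

/-- The least model of a set of positive rules. -/
def Least {W : Type*} (R : Set (W × Set W)) : Set W :=
  {v | ∀ M : Set W, SatRules R M → v ∈ M}

/-- The reduct of the rules of `P` w.r.t. an assignment `θ`: a rule is discarded
if a negatively occurring body variable is true in `θ` or a standard positive
body variable is false in `θ`; the remaining rules keep only their positive
founded body atoms. -/
def reduct (P : Prog V) (θ : Set (V × Bool)) : Set (V × Set V) :=
  {p | ∃ body, (p.1, body) ∈ P.rules ∧
    (∀ v : V, (v, false) ∈ body → (v, true) ∉ θ) ∧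
    (∀ v : V, (v, true) ∈ body → v ∉ P.founded → (v, false) ∉ θ) ∧
    p.2 = {v | v ∈ P.founded ∧ (v, true) ∈ body}}

/-- `θ` is a stable model of `P`: it is consistent, complete on `P.vars`,
satisfies every constraint, and its true founded variables are exactly the
least model of the reduct. -/
def StableModel (P : Prog V) (θ : Set (V × Bool)) : Prop :=
  Consistent θ ∧ (∀ v ∈ P.vars, (v, true) ∈ θ ∨ (v, false) ∈ θ) ∧
  (∀ cl ∈ P.constraints, ∃ l ∈ cl, l ∈ θ) ∧
  (∀ v ∈ P.founded, ((v, true) ∈ θ ↔ v ∈ Least (P.reduct θ)))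

/-- `J₀(θ)`: the negative literals of `θ` together with its positive standard
literals. -/
def J0 (P : Prog V) (θ : Set (V × Bool)) : Set (V × Bool) :=
  {l ∈ θ | l.2 = false ∨ l.1 ∉ P.founded}

/-- The residual of a set of rules w.r.t. a partial assignment `J` (treating a
rule as its clause): a rule is discarded if its head is true in `J` or some
body literal is false in `J`; otherwise the body literals fixed true by `J`
are removed. -/
def residualRules (R : Set (V × Set (V × Bool))) (J : Set (V × Bool)) :
    Set (V × Set (V × Bool)) :=
  {p | ∃ body, (p.1, body) ∈ R ∧ (p.1, true) ∉ J ∧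
    (∀ l ∈ body, lneg l ∉ J) ∧ p.2 = {l ∈ body | l ∉ J}}

/-- The residual of a set of clauses w.r.t. a partial assignment `θ`: satisfied
clauses are discarded and false literals are deleted from the rest. -/
def residualClauses (C : Set (Set (V × Bool))) (θ : Set (V × Bool)) :
    Set (Set (V × Bool)) :=
  {d | ∃ cl ∈ C, (∀ l ∈ cl, l ∉ θ) ∧ d = {l ∈ cl | lneg l ∉ θ}}

/-- The positive founded part of a set of rules: the rules whose body consists
solely of positive founded literals, as positive rules. -/
def posPart (P : Prog V) (R : Set (V × Set (V × Bool))) : Set (V × Set V) :=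
  {p | ∃ body, (p.1, body) ∈ R ∧ (∀ l ∈ body, l.2 = true ∧ l.1 ∈ P.founded) ∧
    p.2 = {v | (v, true) ∈ body}}

/-- The justified assignment `JA(P, θ)`: `J₀(θ)` together with those positive
founded literals of `θ` implied from `J₀(θ)` using the rules of `P`. -/
def JA (P : Prog V) (θ : Set (V × Bool)) : Set (V × Bool) :=
  P.J0 θ ∪ {l | l.2 = true ∧ l.1 ∈ P.founded ∧ l ∈ θ ∧
    l.1 ∈ Least (P.posPart (residualRules P.rules (P.J0 θ)))}

/-- The variables occurring in a set of rules. -/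
def ruleVars (R : Set (V × Set (V × Bool))) : Set V :=
  {v | ∃ p ∈ R, v = p.1 ∨ ∃ b : Bool, (v, b) ∈ p.2}

/-- The variables occurring in a set of clauses. -/
def clauseVars (C : Set (Set (V × Bool))) : Set V :=
  {v | ∃ cl ∈ C, ∃ b : Bool, (v, b) ∈ cl}

/-- The justified residual program `P||θ = (W, S, D)` where, with `J = JA(P,θ)`
and `U = vars(θ) \ vars(J)`, we set `S = R|_J`,
`D = C|_θ ∪ { unit clause u | u ∈ U }` and `W = vars(S) ∪ vars(D)`. -/
def justRes (P : Prog V) (θ : Set (V × Bool)) : Prog V :=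
  let J := P.JA θ
  let U := avars θ \ avars J
  let S := residualRules P.rules J
  let D := residualClauses P.constraints θ ∪ {cl | ∃ u ∈ U, cl = {((u : V), true)}}
  { vars := ruleVars S ∪ clauseVars D
    founded := P.founded ∩ (ruleVars S ∪ clauseVars D)
    rules := S
    constraints := D }

end Prog

open Prog


theorem satRules_least {W : Type*} (R : Set (W × Set W)) : SatRules R (Least R) := by
  intro r hr hsub M hM
  exact hM r hr (fun v hv => hsub hv M hM)

/-- Theorem 1(2): stable models of the original program project to stable
models of the justified residual program. With `P`, partial assignment `θ`,
justified residual program `Q = P||θ` over variables `W`, and remaining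
variables `Vᵣ = V \ (W ∪ vars θ)`: if `θ ∪ π ∪ θᵣ` is a stable model of `P`
for a complete assignment `π` over `W` and an assignment `θᵣ` over `Vᵣ`, then
`π` is a stable model of `Q`. -/
theorem stable_projects_to_justRes {V : Type*} (P : Prog V)
    (θ π θr : Set (V × Bool))
    (hheads : ∀ p ∈ P.rules, p.1 ∈ P.founded)
    (hfv : P.founded ⊆ P.vars)
    (hrv : ruleVars P.rules ⊆ P.vars)
    (hcv : clauseVars P.constraints ⊆ P.vars)
    (hθv : avars θ ⊆ P.vars) (hθc : Consistent θ)
    (hnorule : ∀ v ∈ P.founded,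
      (∀ p ∈ (P.justRes θ).rules, p.1 ≠ v) → (v, false) ∈ θ)
    (hπv : avars π ⊆ (P.justRes θ).vars) (hπc : Consistent π)
    (hπcomp : ∀ v ∈ (P.justRes θ).vars, (v, true) ∈ π ∨ (v, false) ∈ π)
    (hθrv : avars θr ⊆ P.vars \ ((P.justRes θ).vars ∪ avars θ))
    (hstable : StableModel P (θ ∪ π ∪ θr)) :
    StableModel (P.justRes θ) π := by
  classical
  obtain ⟨hσc, hσcomp, hσcons, hσf⟩ := hstable
  set σ := θ ∪ π ∪ θr with hσdef
  set J := P.JA θ with hJdef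
  set S := residualRules P.rules J with hSdef
  set D := residualClauses P.constraints θ ∪
      {cl | ∃ u ∈ avars θ \ avars J, cl = {((u : V), true)}} with hDdef
  have hQv : (P.justRes θ).vars = ruleVars S ∪ clauseVars D := rfl
  have hQf : (P.justRes θ).founded = P.founded ∩ (ruleVars S ∪ clauseVars D) := rfl
  have hQr : (P.justRes θ).rules = S := rfl
  have hQc : (P.justRes θ).constraints = D := rfl
  have hJθ : J ⊆ θ := by
    intro l hl
    rcases hl with hl | hl
    · exact hl.1
    · exact hl.2.2.1
  have hθσ : θ ⊆ σ := fun l hl => Or.inl (Or.inl hl)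
  have hπσ : π ⊆ σ := fun l hl => Or.inl (Or.inr hl)
  have hθrσ : θr ⊆ σ := fun l hl => Or.inr hl
  -- a variable of Q cannot be positively justified
  have hJW : ∀ v : V, (v, true) ∈ J → v ∉ (P.justRes θ).vars := by
    intro v hvJ hvW
    rw [hQv] at hvW
    rcases hvW with ⟨p, hp, hor⟩ | ⟨cl, hcl, b, hvb⟩
    · obtain ⟨body, hb, hhead, hbody, hp2⟩ := hp
      rcases hor with rfl | ⟨b, hvb⟩
      · exact hhead hvJ
      · rw [hp2] at hvb
        cases b with
        | true => exact hvb.2 hvJ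
        | false => exact hbody _ hvb.1 hvJ
    · rcases hcl with ⟨cl0, hcl0, hall, rfl⟩ | ⟨u, hu, rfl⟩
      · obtain ⟨hvb1, hvb2⟩ := hvb
        cases b with
        | true => exact hall _ hvb1 (hJθ hvJ)
        | false => exact hvb2 (hJθ hvJ)
      · have : v = u := by
          have := hvb
          simp only [Set.mem_singleton_iff, Prod.mk.injEq] at this
          exact this.1
        exact hu.2 (Or.inl (this ▸ hvJ))
  -- unjustified θ-variables are true in π
  have hUπ : ∀ u : V, u ∈ avars θ → u ∉ avars J → (u, true) ∈ π := by
    intro u huθ huJ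
    have huθt : (u, true) ∈ θ := by
      rcases huθ with h | h
      · exact h
      · exact absurd (Or.inr (Or.inl ⟨h, Or.inl rfl⟩ : (u, false) ∈ J)) huJ
    have huW : u ∈ (P.justRes θ).vars := by
      rw [hQv]
      exact Or.inr ⟨{((u : V), true)}, Or.inr ⟨u, ⟨huθ, huJ⟩, rfl⟩, true, rfl⟩
    rcases hπcomp u huW with h | h
    · exact h
    · exact absurd ⟨hθσ huθt, hπσ h⟩ (hσc u)
  -- σ-true variables of Q are π-true
  have hWπ : ∀ v : V, v ∈ (P.justRes θ).vars → (v, true) ∈ σ → (v, true) ∈ π := by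
    intro v hvW hvσ
    rcases hπcomp v hvW with h | h
    · exact h
    · exact absurd ⟨hvσ, hπσ h⟩ (hσc v)
  have hθrW : ∀ l : V × Bool, l ∈ θr → l.1 ∉ (P.justRes θ).vars := by
    intro l hl
    have : l.1 ∈ avars θr := by
      cases hb : l.2 with
      | true => exact Or.inl (by rw [← hb]; exact hl)
      | false => exact Or.inr (by rw [← hb]; exact hl)
    exact fun h => (hθrv this).2 (Or.inl h)
  have hθrθ : ∀ l : V × Bool, l ∈ θr → l.1 ∉ avars θ := by
    intro l hl
    have : l.1 ∈ avars θr := by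
      cases hb : l.2 with
      | true => exact Or.inl (by rw [← hb]; exact hl)
      | false => exact Or.inr (by rw [← hb]; exact hl)
    exact fun h => (hθrv this).2 (Or.inr h)
  -- Claim 3: least model of Q-reduct is included in least model of P-reduct
  have hLπσ : Least ((P.justRes θ).reduct π) ⊆ Least (P.reduct σ) := by
    intro v hv
    refine hv (Least (P.reduct σ)) ?_
    rintro r ⟨body, hbS, hneg, hpos, hr2⟩ hsub
    rw [hQr] at hbS
    obtain ⟨body0, hb0, hhead, hbodyJ, hbodyeq0⟩ := hbS
    have hbodyeq : body = {l ∈ body0 | l ∉ J} := hbodyeq0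
    have hmem : (r.1, {w | w ∈ P.founded ∧ (w, true) ∈ body0}) ∈ P.reduct σ := by
      refine ⟨body0, hb0, ?_, ?_, rfl⟩
      · intro w hw hwtσ
        by_cases hwJ : ((w : V), false) ∈ J
        · exact hσc w ⟨hwtσ, hθσ (hJθ hwJ)⟩
        · have hwb : ((w : V), false) ∈ body := by rw [hbodyeq]; exact ⟨hw, hwJ⟩
          have hwπ : ((w : V), true) ∉ π := hneg w hwb
          have hwtJ : ((w : V), true) ∉ J := hbodyJ _ hw
          have hwW : w ∈ (P.justRes θ).vars := by
            rw [hQv]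
            exact Or.inl ⟨(r.1, body), ⟨body0, hb0, hhead, hbodyJ, hbodyeq0⟩,
              Or.inr ⟨false, hwb⟩⟩
          rcases hwtσ with (h | h) | h
          · have : w ∈ avars θ := Or.inl h
            have : ((w : V), true) ∈ π := hUπ w this (by
              rintro (h' | h')
              · exact hwtJ h'
              · exact hwJ h')
            exact hwπ this
          · exact hwπ h
          · exact hθrW _ h hwW
      · intro w hw hwf hwfσ
        by_cases hwJ : ((w : V), true) ∈ J
        · exact hσc w ⟨hθσ (hJθ hwJ), hwfσ⟩
        · have hwb : ((w : V), true) ∈ body := by rw [hbodyeq]; exact ⟨hw, hwJ⟩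
          have hwQf : w ∉ (P.justRes θ).founded := by
            rw [hQf]; exact fun h => hwf h.1
          have hwπ : ((w : V), false) ∉ π := hpos w hwb hwQf
          have hwW : w ∈ (P.justRes θ).vars := by
            rw [hQv]
            exact Or.inl ⟨(r.1, body), ⟨body0, hb0, hhead, hbodyJ, hbodyeq0⟩,
              Or.inr ⟨true, hwb⟩⟩
          rcases hwfσ with (h | h) | h
          · exact (hbodyJ _ hw) (Or.inl ⟨h, Or.inl rfl⟩)
          · exact hwπ h
          · exact hθrW _ h hwW
    refine satRules_least (P.reduct σ) (r.1, {w | w ∈ P.founded ∧ (w, true) ∈ body0}) hmem ?_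
    rintro w ⟨hwf, hwb0⟩
    by_cases hwJ : ((w : V), true) ∈ J
    · exact (hσf w hwf).1 (hθσ (hJθ hwJ))
    · have hwb : ((w : V), true) ∈ body := by rw [hbodyeq]; exact ⟨hwb0, hwJ⟩
      have hwW : w ∈ (P.justRes θ).vars := by
        rw [hQv]
        exact Or.inl ⟨(r.1, body), ⟨body0, hb0, hhead, hbodyJ, hbodyeq0⟩,
          Or.inr ⟨true, hwb⟩⟩
      have : w ∈ r.2 := by
        rw [hr2]
        exact ⟨by rw [hQf]; exact ⟨hwf, by rw [← hQv]; exact hwW⟩, hwb⟩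
      exact hsub this
  -- Claim 1: least model of P-reduct splits into justified part and Q part
  have hLσ : ∀ v : V, v ∈ Least (P.reduct σ) →
      v ∈ P.founded ∧ ((v, true) ∈ J ∨ v ∈ Least ((P.justRes θ).reduct π)) := by
    intro v hv
    refine hv {w | w ∈ P.founded ∧ ((w, true) ∈ J ∨ w ∈ Least ((P.justRes θ).reduct π))} ?_
    rintro r ⟨body0, hb0, hnegσ, hposσ, hr2⟩ hsub
    have hrf : r.1 ∈ P.founded := hheads (r.1, body0) hb0
    refine ⟨hrf, ?_⟩
    by_cases hJh : (r.1, true) ∈ J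
    · exact Or.inl hJh
    right
    have hbodyJ : ∀ l ∈ body0, lneg l ∉ J := by
      rintro ⟨w, b⟩ hl hlJ
      cases b with
      | false => exact hnegσ w hl (hθσ (hJθ hlJ))
      | true =>
        have hwfθ : ((w : V), false) ∈ θ := hJθ hlJ
        by_cases hwf : w ∈ P.founded
        · have hwM := hsub (by rw [hr2]; exact ⟨hwf, hl⟩)
          rcases hwM.2 with h | h
          · exact hθc w ⟨hJθ h, hwfθ⟩
          · exact hσc w ⟨(hσf w hwf).2 (hLπσ h), hθσ hwfθ⟩
        · exact hposσ w hl hwf (hθσ hwfθ)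
    have hS : (r.1, {l ∈ body0 | l ∉ J}) ∈ S := ⟨body0, hb0, hJh, hbodyJ, rfl⟩
    set body : Set (V × Bool) := {l ∈ body0 | l ∉ J} with hbody
    have hmem : (r.1, {w | w ∈ (P.justRes θ).founded ∧ (w, true) ∈ body}) ∈
        (P.justRes θ).reduct π := by
      refine ⟨body, by rw [hQr]; exact hS, ?_, ?_, rfl⟩
      · intro w hw hwπ
        exact hnegσ w hw.1 (hπσ hwπ)
      · intro w hw hwQf hwπ
        have hwW : w ∈ (P.justRes θ).vars := by
          rw [hQv]
          exact Or.inl ⟨(r.1, body), hS, Or.inr ⟨true, hw⟩⟩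
        have hwf : w ∉ P.founded := by
          intro h
          exact hwQf (by rw [hQf]; exact ⟨h, by rw [← hQv]; exact hwW⟩)
        exact hposσ w hw.1 hwf (hπσ hwπ)
    refine satRules_least ((P.justRes θ).reduct π)
      (r.1, {w | w ∈ (P.justRes θ).founded ∧ (w, true) ∈ body}) hmem ?_
    rintro w ⟨hwQf, hwb⟩
    have hwM := hsub (by rw [hr2]; exact ⟨(by rw [hQf] at hwQf; exact hwQf.1), hwb.1⟩)
    rcases hwM.2 with h | h
    · exact absurd h hwb.2
    · exact h
  -- assemble the stable model conditions
  refine ⟨hπc, hπcomp, ?_, ?_⟩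
  · intro cl hcl
    rw [hQc] at hcl
    rcases hcl with ⟨cl0, hcl0, hall, rfl⟩ | ⟨u, hu, rfl⟩
    · obtain ⟨l, hlcl, hlσ⟩ := hσcons cl0 hcl0
      obtain ⟨w, b⟩ := l
      have hlnθ : lneg (w, b) ∉ θ := by
        intro h
        cases b with
        | true => exact hσc w ⟨hlσ, hθσ h⟩
        | false => exact hσc w ⟨hθσ h, hlσ⟩
      have hlmem : ((w : V), b) ∈ {l ∈ cl0 | lneg l ∉ θ} := ⟨hlcl, hlnθ⟩
      have hlW : w ∈ (P.justRes θ).vars := by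
        rw [hQv]
        exact Or.inr ⟨{l ∈ cl0 | lneg l ∉ θ}, by
          rw [hDdef]; exact Or.inl ⟨cl0, hcl0, hall, rfl⟩, b, hlmem⟩
      have hlπ : ((w : V), b) ∈ π := by
        rcases hlσ with (h | h) | h
        · exact absurd h (hall _ hlcl)
        · exact h
        · exact absurd hlW (hθrW _ h)
      exact ⟨(w, b), hlmem, hlπ⟩
    · exact ⟨(u, true), rfl, hUπ u hu.1 hu.2⟩
  · intro v hvQf
    have hvW : v ∈ (P.justRes θ).vars := by
      rw [hQf] at hvQf; rw [hQv]; exact hvQf.2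
    have hvf : v ∈ P.founded := by rw [hQf] at hvQf; exact hvQf.1
    constructor
    · intro hvπ
      have hvLσ : v ∈ Least (P.reduct σ) := (hσf v hvf).1 (hπσ hvπ)
      rcases (hLσ v hvLσ).2 with h | h
      · exact absurd hvW (hJW v h)
      · exact h
    · intro hvL
      exact hWπ v hvW ((hσf v hvf).2 (hLπσ hvL))
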